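/- arXiv:2101.02572 — 3 statements merged into one kernel-verified Lean document; each statement's English description precedes it below -/
import Mathlib

section
/- For every rooted tree T and every vertex w of T, the restoration value R_T(w) is a positive integer. -/
/-- A rooted tree: a root with a finite list of subtrees. -/
inductive RTree where
  | node : List RTree → RTree

/-- Restoration number and period of a rooted tree, by mutual recursion:
`RP (leaf) = (1, 2)`; for a root with subtrees `ts`,
`R = lcm of the periods of the subtrees` and
`P = (m+2)·R − Σᵢ (R / P(Tᵢ))·R(Tᵢ)`. -/
def RTree.RP : RTree → ℕ × ℕ
  | .node [] => (1, 2)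
  | .node ts@(_ :: _) =>
      let rps := ts.attach.map (fun t => RTree.RP t.1)
      let r := (rps.map Prod.snd).foldr Nat.lcm 1
      (r, (ts.length + 2) * r - (rps.map (fun q => r / q.2 * q.1)).sum)
  decreasing_by
    cases t with
    | mk t ht =>
      have := List.sizeOf_lt_of_mem ht
      simp_all; omega

/-- Restoration number of a rooted tree. -/
def RTree.R (t : RTree) : ℕ := t.RP.1

/-- Period of a rooted tree. -/
def RTree.P (t : RTree) : ℕ := t.RP.2

/-- Vertices are addressed by paths from the root (lists of child indices).
`restAt T w` is the restoration value `R_T(w)` of the vertex `w` in `T`: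
`R_T(root) = R(T)` and for `w` in the `k`-th subtree `T_k`,
`R_T(k :: w) = (R(T)/P(T_k)) · R_{T_k}(w)`. (Value `0` for invalid addresses.) -/
def RTree.restAt : RTree → List ℕ → ℕ
  | t, [] => t.R
  | .node ts, k :: rest =>
      match h : ts[k]? with
      | some tk => (RTree.node ts).R / tk.P * tk.restAt rest
      | none => 0
  decreasing_by
    simp only [List.getElem?_eq_some_iff] at h
    obtain ⟨hk, rfl⟩ := h
    simpa using Nat.lt_succ_of_le (List.sizeOf_le_of_mem (List.getElem_mem hk))

/-- `isVertex T w`: the address `w` denotes an actual vertex of `T`. -/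
def RTree.isVertex : RTree → List ℕ → Prop
  | _, [] => True
  | .node ts, k :: rest =>
      match h : ts[k]? with
      | some tk => tk.isVertex rest
      | none => False
  decreasing_by
    simp only [List.getElem?_eq_some_iff] at h
    obtain ⟨hk, rfl⟩ := h
    simpa using Nat.lt_succ_of_le (List.sizeOf_le_of_mem (List.getElem_mem hk))

/-!
By induction on the tree, `R(T) > 0` and `2·R(T) ≤ P(T)`: every summand `(R(T)/P(Tᵢ))·R(Tᵢ)` of
`P(T)` is at most `(R(T)/P(Tᵢ))·P(Tᵢ) ≤ R(T)`, so `P(T) ≥ (m+2)·R(T) − m·R(T)`. Along the path to a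
vertex, each factor `R(T)/P(Tₖ)` is then a positive integer, because `P(Tₖ) > 0` divides the lcm `R(T)`.
-/

namespace RTree

theorem induction_on {p : RTree → Prop} (step : ∀ ts, (∀ t ∈ ts, p t) → p (node ts)) :
    ∀ t, p t
  | node ts => step ts fun t ht =>
      have := List.sizeOf_lt_of_mem ht
      induction_on step t
termination_by t => sizeOf t

theorem R_node (ts : List RTree) : (node ts).R = (ts.map P).foldr Nat.lcm 1 := by
  cases ts with
  | nil => simp [R, RP]
  | cons a ts =>
    rw [R, RP]
    simp only [List.map_map, Function.comp_def, List.map_attach_eq_pmap, List.pmap_eq_map]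
    rfl

theorem P_node (ts : List RTree) :
    (node ts).P = (ts.length + 2) * (node ts).R - (ts.map fun t => (node ts).R / t.P * t.R).sum := by
  cases ts with
  | nil => simp [R, P, RP]
  | cons a ts =>
    rw [R_node, P, RP]
    simp only [List.map_map, Function.comp_def, List.map_attach_eq_pmap, List.pmap_eq_map]
    rfl

theorem P_dvd_R_node {ts : List RTree} {t : RTree} (ht : t ∈ ts) : t.P ∣ (node ts).R := by
  rw [R_node]
  exact Multiset.dvd_lcm (Multiset.mem_coe.2 (List.mem_map_of_mem ht))

theorem R_node_pos {ts : List RTree} (h : ∀ t ∈ ts, 0 < t.P) : 0 < (node ts).R := by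
  rw [R_node, Nat.pos_iff_ne_zero]
  change (↑(ts.map P) : Multiset ℕ).lcm ≠ 0
  rw [Ne, Multiset.lcm_eq_zero_iff, Multiset.mem_coe, List.mem_map]
  rintro ⟨t, ht, hP⟩
  exact (h t ht).ne' hP

theorem two_mul_R_node_le_P {ts : List RTree} (h : ∀ t ∈ ts, t.R ≤ t.P) :
    2 * (node ts).R ≤ (node ts).P := by
  rw [P_node]
  set r := (node ts).R
  have hterm : ∀ t ∈ ts, r / t.P * t.R ≤ r := fun t ht =>
    calc r / t.P * t.R ≤ r / t.P * t.P := Nat.mul_le_mul_left _ (h t ht)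
      _ ≤ r := Nat.div_mul_le_self r t.P
  have hsum : (ts.map fun t => r / t.P * t.R).sum ≤ ts.length * r := by
    simpa using List.sum_le_card_nsmul (ts.map fun t => r / t.P * t.R) r (by simpa using hterm)
  have : (ts.length + 2) * r = 2 * r + ts.length * r := by ring
  omega

theorem R_pos_and_two_mul_R_le_P (t : RTree) : 0 < t.R ∧ 2 * t.R ≤ t.P := by
  induction t using induction_on with
  | step ts ih =>
    refine ⟨R_node_pos fun t ht => ?_, two_mul_R_node_le_P fun t ht => ?_⟩ <;>
    · have := ih t ht
      omega

theorem R_pos (t : RTree) : 0 < t.R := (R_pos_and_two_mul_R_le_P t).1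

theorem P_pos (t : RTree) : 0 < t.P := by
  have := R_pos_and_two_mul_R_le_P t
  omega

theorem restAt_cons {ts : List RTree} {k : ℕ} {tk : RTree} (hk : ts[k]? = some tk)
    (w : List ℕ) : (node ts).restAt (k :: w) = (node ts).R / tk.P * tk.restAt w := by
  rw [restAt]
  split <;> simp_all

theorem isVertex_cons {ts : List RTree} {k : ℕ} {w : List ℕ} :
    (node ts).isVertex (k :: w) ↔ ∃ tk, ts[k]? = some tk ∧ tk.isVertex w := by
  rw [isVertex]
  split <;> simp_all

end RTree

/-- For every rooted tree `T` and every vertex `w` of `T`, the restoration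
value `R_T(w)` is a positive integer. -/
theorem restoration_value_pos (T : RTree) (w : List ℕ) (hw : T.isVertex w) :
    0 < T.restAt w := by
  induction w generalizing T with
  | nil =>
    rw [RTree.restAt]
    exact T.R_pos
  | cons k w ih =>
    obtain ⟨ts⟩ := T
    obtain ⟨tk, hk, hvertex⟩ := RTree.isVertex_cons.1 hw
    rw [RTree.restAt_cons hk]
    have hdvd : tk.P ∣ (RTree.node ts).R := RTree.P_dvd_R_node (List.mem_of_getElem? hk)
    have hfactor : 0 < (RTree.node ts).R / tk.P :=
      Nat.div_pos (Nat.le_of_dvd (RTree.R_pos _) hdvd) tk.P_pos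
    exact Nat.mul_pos hfactor (ih tk hvertex)
end

section
/- For the path rooted tree of length n (a path on n+1 vertices rooted at one end), the restoration number and period satisfy the Fibonacci-like recursion: R(Path_0) = 1, P(Path_0) = 2, and R(Path_{n+1}) = P(Path_n), P(Path_{n+1}) = 3·R(Path_{n+1}) − R_{Path_{n+1}}(child), where R_{Path_{n+1}}(child) = R(Path_n). Consequently P(Path_n) for n = 0,1,2 equals 2, 5, 13. -/
/-- `path n`: the rooted path on `n+1` vertices, rooted at one end. -/
def RTree.path : ℕ → RTree
  | 0 => .node []
  | n + 1 => .node [RTree.path n]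

lemma RTree.RP_single (t : RTree) :
    (RTree.node [t]).RP = (t.P, 3 * t.P - t.P / t.P * t.R) := by
  rw [RTree.RP]
  simp [RTree.P, RTree.R, Nat.lcm, Nat.lcm_one_right]

lemma path_aux (n : ℕ) :
    1 ≤ (RTree.path n).R ∧ (RTree.path n).R ≤ (RTree.path n).P ∧ 2 ≤ (RTree.path n).P ∧
    (RTree.path (n+1)).R = (RTree.path n).P ∧
    (RTree.path (n+1)).P = 3 * (RTree.path n).P - (RTree.path n).R := by
  induction n with
  | zero =>
    have h0 : (RTree.path 0).RP = (1, 2) := by rw [RTree.path, RTree.RP]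
    have h1 := RTree.RP_single (RTree.path 0)
    simp [RTree.path, RTree.R, RTree.P] at *
    simp [h0, h1, RTree.R, RTree.P]
  | succ n ih =>
    obtain ⟨h1, h2, h3, h4, h5⟩ := ih
    have h1' : 1 ≤ (RTree.path (n+1)).R := by omega
    have h2' : (RTree.path (n+1)).R ≤ (RTree.path (n+1)).P := by omega
    have h3' : 2 ≤ (RTree.path (n+1)).P := by omega
    have hP : 0 < (RTree.path (n+1)).P := by omega
    have hkey := RTree.RP_single (RTree.path (n+1))
    have hd : (RTree.path (n+1)).P / (RTree.path (n+1)).P = 1 := Nat.div_self hP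
    rw [hd, one_mul] at hkey
    refine ⟨h1', h2', h3', ?_, ?_⟩
    · show (RTree.node [RTree.path (n+1)]).RP.1 = _
      rw [hkey]
    · show (RTree.node [RTree.path (n+1)]).RP.2 = _
      rw [hkey]

/-- Fibonacci-like recursion for rooted paths: `R(Path₀)=1`, `P(Path₀)=2`,
`R(Path_{n+1}) = P(Path_n)`, `P(Path_{n+1}) = 3·P(Path_n) − R(Path_n)`;
consequently the periods for `n = 0,1,2` are `2, 5, 13`. -/
theorem path_recursion :
    (RTree.path 0).R = 1 ∧ (RTree.path 0).P = 2
      ∧ (∀ n, (RTree.path (n + 1)).R = (RTree.path n).P)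
      ∧ (∀ n, (RTree.path (n + 1)).P = 3 * (RTree.path n).P - (RTree.path n).R)
      ∧ (RTree.path 0).P = 2 ∧ (RTree.path 1).P = 5 ∧ (RTree.path 2).P = 13 := by
  have h0 : (RTree.path 0).RP = (1, 2) := by rw [RTree.path, RTree.RP]
  have hR0 : (RTree.path 0).R = 1 := by simp [RTree.R, h0]
  have hP0 : (RTree.path 0).P = 2 := by simp [RTree.P, h0]
  have hR := fun n => (path_aux n).2.2.2.1
  have hP := fun n => (path_aux n).2.2.2.2
  refine ⟨hR0, hP0, hR, hP, hP0, ?_, ?_⟩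
  · rw [hP 0, hR0, hP0]
  · rw [hP 1, hR 0, hP 0, hR0, hP0]
end

section
/- For the sequence a_n = P(Path_n) of periods of rooted paths, a_0 = 2 and a_{n+1} = 3·a_n − a_{n-1} with a_{-1} interpreted appropriately; explicitly a_{n+1} = 3·a_n − R(Path_n) and R(Path_{n+1}) = a_n, which yields a_n = F_{2n+3} where F denotes the Fibonacci numbers (F_1 = F_2 = 1), i.e. the periods are 2, 5, 13, 34, 89, .... -/
/-! A root with a single subtree `T` has `R = P(T)` and `P = 3·P(T) − R(T)`. The pair
`(F_{2n+1}, F_{2n+3})` obeys the same recursion, since `F_{k+4} + F_k = 3·F_{k+2}`, and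
both start at `(1, 2)`. -/

theorem Nat.fib_add_four_add_fib (n : ℕ) : fib (n + 4) + fib n = 3 * fib (n + 2) := by
  have h2 : fib (n + 2) = fib n + fib (n + 1) := fib_add_two
  have h3 : fib (n + 3) = fib (n + 1) + fib (n + 2) := fib_add_two
  have h4 : fib (n + 4) = fib (n + 2) + fib (n + 3) := fib_add_two
  omega

namespace RTree

theorem RP_node_singleton {t : RTree} (ht : t.P ≠ 0) :
    (node [t]).RP = (t.P, 3 * t.P - t.R) := by
  rw [P] at ht
  rw [RP]
  simp [P, R, Nat.div_self (Nat.pos_of_ne_zero ht)]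

theorem R_node_singleton {t : RTree} (ht : t.P ≠ 0) : (node [t]).R = t.P := by
  rw [R, RP_node_singleton ht]

theorem P_node_singleton {t : RTree} (ht : t.P ≠ 0) : (node [t]).P = 3 * t.P - t.R := by
  rw [P, RP_node_singleton ht]

theorem R_path_eq_fib_and_P_path_eq_fib (n : ℕ) :
    (path n).R = Nat.fib (2 * n + 1) ∧ (path n).P = Nat.fib (2 * n + 3) := by
  induction n with
  | zero =>
    rw [path, R, P, RP]
    exact ⟨rfl, rfl⟩
  | succ n ih =>
    obtain ⟨hR, hP⟩ := ih
    have hP0 : (path n).P ≠ 0 := by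
      rw [hP]
      exact (Nat.fib_pos.mpr (by omega)).ne'
    refine ⟨R_node_singleton hP0 |>.trans hP, ?_⟩
    rw [path, P_node_singleton hP0, hR, hP]
    have h : Nat.fib (2 * (n + 1) + 3) + Nat.fib (2 * n + 1) = 3 * Nat.fib (2 * n + 3) :=
      Nat.fib_add_four_add_fib (2 * n + 1)
    omega

theorem P_path_ne_zero (n : ℕ) : (path n).P ≠ 0 := by
  rw [(R_path_eq_fib_and_P_path_eq_fib n).2]
  exact (Nat.fib_pos.mpr (by omega)).ne'

end RTree

/-- For the periods `aₙ = P(Pathₙ)` of rooted paths: `a₀ = 2`,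
`a_{n+1} = 3·aₙ − R(Pathₙ)` and `R(Path_{n+1}) = aₙ`; explicitly
`R(Pathₙ) = F_{2n+1}` and `P(Pathₙ) = F_{2n+3}`, so the periods are
`2, 5, 13, 34, 89, …`. -/
theorem path_periods_fibonacci :
    (RTree.path 0).P = 2
      ∧ (∀ n, (RTree.path (n + 1)).P = 3 * (RTree.path n).P - (RTree.path n).R)
      ∧ (∀ n, (RTree.path (n + 1)).R = (RTree.path n).P)
      ∧ (∀ n, (RTree.path n).R = Nat.fib (2 * n + 1))
      ∧ (∀ n, (RTree.path n).P = Nat.fib (2 * n + 3)) :=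
  ⟨(RTree.R_path_eq_fib_and_P_path_eq_fib 0).2,
    fun n => RTree.P_node_singleton (RTree.P_path_ne_zero n),
    fun n => RTree.R_node_singleton (RTree.P_path_ne_zero n),
    fun n => (RTree.R_path_eq_fib_and_P_path_eq_fib n).1,
    fun n => (RTree.R_path_eq_fib_and_P_path_eq_fib n).2⟩
end
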